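/- Let n ≥ 2, let M_1, …, M_n be DFAs over a common alphabet Σ, and let G be the labeled graph obtained from the third reduction construction applied to M_1, …, M_n. If ⋂_{i=1}^n L(M_i) ≠ ∅, then the minimum length of a synchronizing word for G equals 2 plus the minimum length of a word in ⋂_{i=1}^n L(M_i). -/

import Mathlib

/-- A labeled graph over vertex type `V` and alphabet `A`, given by its
labeled-edge relation: `Edge p a q` means there is an edge labeled `a`
from `p` to `q`. -/
structure LabeledGraph (V A : Type) where
  Edge : V → A → V → Prop

namespace LabeledGraph

variable {V A : Type}

/-- `G.Walk p w q` : there is a (finite) path from `p` to `q` labeled `w`. -/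
def Walk (G : LabeledGraph V A) : V → List A → V → Prop
  | p, [], q => p = q
  | p, a :: w, q => ∃ r, G.Edge p a r ∧ Walk G r w q

/-- The follower set of a vertex: labels of finite paths starting at `q`. -/
def follower (G : LabeledGraph V A) (q : V) : Set (List A) :=
  { w | ∃ q', G.Walk q w q' }

/-- The transition action on sets of vertices: `S·w`. -/
def transSet (G : LabeledGraph V A) (S : Set V) (w : List A) : Set V :=
  { q' | ∃ q ∈ S, G.Walk q w q' }

/-- `G` is deterministic (right-resolving). -/
def Deterministic (G : LabeledGraph V A) : Prop :=
  ∀ p a q q', G.Edge p a q → G.Edge p a q' → q = q'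

/-- `G` is essential: every vertex has an outgoing and an incoming edge. -/
def Essential (G : LabeledGraph V A) : Prop :=
  ∀ q, (∃ a r, G.Edge q a r) ∧ (∃ a p, G.Edge p a q)

/-- The sofic shift presented by `G`: labels of bi-infinite paths. -/
def shift (G : LabeledGraph V A) : Set (ℤ → A) :=
  { x | ∃ v : ℤ → V, ∀ j : ℤ, G.Edge (v j) (x j) (v (j + 1)) }

/-- `w` is a synchronizing word for `G`: `Q_G · w` is a singleton. -/
def SyncWord (G : LabeledGraph V A) (w : List A) : Prop :=
  ∃ r, G.transSet Set.univ w = {r}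

/-- A vertex `q` is synchronizing: some word synchronizes to `q`. -/
def SyncVertex (G : LabeledGraph V A) (q : V) : Prop :=
  ∃ w, G.transSet Set.univ w = {q}

/-- `G` is synchronizing: every vertex is synchronizing. -/
def Synchronizing (G : LabeledGraph V A) : Prop :=
  ∀ q, G.SyncVertex q

/-- `G` is follower-separated. -/
def FollowerSeparated (G : LabeledGraph V A) : Prop :=
  ∀ p q, G.follower p = G.follower q → p = q

/-- `G` is irreducible (strongly connected). -/
def StronglyConnected (G : LabeledGraph V A) : Prop :=
  ∀ p q, ∃ w, G.Walk p w q

/-- `q` is reachable from `p`. -/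
def Reachable (G : LabeledGraph V A) (p q : V) : Prop :=
  ∃ w, G.Walk p w q

/-- `C` is an irreducible component: an equivalence class of mutual reachability. -/
def IsIrredComponent (G : LabeledGraph V A) (C : Set V) : Prop :=
  ∃ p, C = { q | G.Reachable p q ∧ G.Reachable q p }

/-- `C` is terminal: everything reachable from `C` lies in `C`. -/
def TerminalSet (G : LabeledGraph V A) (C : Set V) : Prop :=
  ∀ p ∈ C, ∀ q, G.Reachable p q → q ∈ C

/-- `C` is initial: everything that reaches `C` lies in `C`. -/
def InitialSet (G : LabeledGraph V A) (C : Set V) : Prop :=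
  ∀ q ∈ C, ∀ p, G.Reachable p q → p ∈ C

/-- Subgraph induced by a set `P` of vertices. -/
def induce (G : LabeledGraph V A) (P : Set V) : LabeledGraph P A where
  Edge := fun p a q => G.Edge p.1 a q.1

/-- The graph `Ĝ`: vertices are ordered pairs of distinct vertices of `G`,
with an edge labeled `a` from `(p₁,p₂)` to `(q₁,q₂)` iff `G` has edges labeled
`a` from `p₁` to `q₁` and from `p₂` to `q₂`. -/
def pairGraph (G : LabeledGraph V A) : LabeledGraph { pq : V × V // pq.1 ≠ pq.2 } A where
  Edge := fun x a y => G.Edge x.1.1 a y.1.1 ∧ G.Edge x.1.2 a y.1.2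

end LabeledGraph

/-- The word `w` appears in the bi-infinite sequence `x`. -/
def AppearsIn {A : Type} (w : List A) (x : ℤ → A) : Prop :=
  ∃ i : ℤ, ∀ n : Fin w.length, x (i + (n : ℕ)) = w.get n

/-- The language of a subset of the full shift: all finite words appearing
in some point of `X`. -/
def lang {A : Type} (X : Set (ℤ → A)) : Set (List A) :=
  { w | ∃ x ∈ X, AppearsIn w x }

/-- `X` is a shift space. -/
def IsShiftSpace {A : Type} (X : Set (ℤ → A)) : Prop :=
  ∃ F : Set (List A), X = { x | ∀ w ∈ F, ¬ AppearsIn w x }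

/-- `X` is a shift of finite type. -/
def IsSFT {A : Type} (X : Set (ℤ → A)) : Prop :=
  ∃ F : Set (List A), F.Finite ∧ X = { x | ∀ w ∈ F, ¬ AppearsIn w x }

/-- `w` is intrinsically synchronizing for `X`. -/
def IntrinsicallySync {A : Type} (X : Set (ℤ → A)) (w : List A) : Prop :=
  w ∈ lang X ∧ ∀ u v, u ++ w ∈ lang X → w ++ v ∈ lang X → u ++ (w ++ v) ∈ lang X

/-- `X` is an irreducible shift space. -/
def IrreducibleShift {A : Type} (X : Set (ℤ → A)) : Prop :=
  ∀ u ∈ lang X, ∀ v ∈ lang X, ∃ w, u ++ (w ++ v) ∈ lang X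

/-- The follower set of a word `u` in `X`. -/
def followerX {A : Type} (X : Set (ℤ → A)) (u : List A) : Set (List A) :=
  { w | u ++ w ∈ lang X }

/-- `X` is `M`-step: every word of `B(X)` of length at least `M` is
intrinsically synchronizing for `X`. -/
def MStep {A : Type} (X : Set (ℤ → A)) (M : ℕ) : Prop :=
  ∀ w ∈ lang X, M ≤ w.length → IntrinsicallySync X w

/-- A deterministic finite automaton over state type `Q` and alphabet `A`. -/
structure DFA' (Q A : Type) where
  step : Q → A → Q
  start : Q
  accept : Set Q

/-- Extended transition function. -/
def DFA'.evalFrom {Q A : Type} (M : DFA' Q A) (q : Q) (w : List A) : Q :=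
  w.foldl M.step q

/-- The language of a DFA. -/
def DFA'.lang {Q A : Type} (M : DFA' Q A) : Set (List A) :=
  { w | M.evalFrom M.start w ∈ M.accept }

/-- Alphabet `Σ ∪ {◁, ▷}`. -/
inductive Sym3 (A : Type) : Type
  | letter : A → Sym3 A
  | lm : Sym3 A  -- ◁
  | rm : Sym3 A  -- ▷

/-- Vertices of the third reduction construction: the success state `t`,
the pre-initial states `p_i`, the fail states `r_i`, and the DFA states. -/
inductive V3 {n : ℕ} (Q : Fin n → Type) : Type
  | t : V3 Q
  | pre : Fin n → V3 Q
  | fail : Fin n → V3 Q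
  | st : (i : Fin n) → Q i → V3 Q

/-- Edges of the third reduction construction. -/
inductive Red3Edge {n : ℕ} {Q : Fin n → Type} {A : Type} (M : ∀ i, DFA' (Q i) A) :
    V3 Q → Sym3 A → V3 Q → Prop
  /-- self loop labeled `▷` on `t` -/
  | tLoop : Red3Edge M .t .rm .t
  /-- self loop labeled `▷` on `p_i` -/
  | preRm (i : Fin n) : Red3Edge M (.pre i) .rm (.pre i)
  /-- self loop labeled `a` on `p_i` for each `a ∈ Σ` -/
  | preLetter (i : Fin n) (a : A) : Red3Edge M (.pre i) (.letter a) (.pre i)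
  /-- self loop labeled `▷` on `r_i` -/
  | failRm (i : Fin n) : Red3Edge M (.fail i) .rm (.fail i)
  /-- the embedded DFA transitions -/
  | dfaStep (i : Fin n) (q : Q i) (a : A) :
      Red3Edge M (.st i q) (.letter a) (.st i ((M i).step q a))
  /-- edge labeled `◁` from `p_i` to `s_i` -/
  | enter (i : Fin n) : Red3Edge M (.pre i) .lm (.st i ((M i).start))
  /-- edge labeled `▷` from each accepting state of `M_i` to `t` -/
  | acc (i : Fin n) (q : Q i) : q ∈ (M i).accept → Red3Edge M (.st i q) .rm .t
  /-- edge labeled `▷` from each nonaccepting state of `M_i` to `r_i` -/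
  | rej (i : Fin n) (q : Q i) : q ∉ (M i).accept → Red3Edge M (.st i q) .rm (.fail i)

/-- The labeled graph `G` of the third reduction construction. -/
def Red3 {n : ℕ} {Q : Fin n → Type} {A : Type} (M : ∀ i, DFA' (Q i) A) :
    LabeledGraph (V3 Q) (Sym3 A) where
  Edge := Red3Edge M

/-! A synchronizing word must contain `◁`, since the loops at the vertices `p_i` are otherwise
never left, and its first `◁` can only be read from some `p_i`. What follows is read inside the
copies of the automata, and the runs of two distinct copies merge only if both end in `t`,
i.e. only if the letters read before the first subsequent `▷` form a word accepted by every
`M_i`. Around that word the synchronizing word has at least the `◁` and one `▷`; conversely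
`◁ w ▷` sends every vertex from which it can be read to `t` whenever `w ∈ ⋂ᵢ L(Mᵢ)`. -/

namespace LabeledGraph

variable {V A : Type} {G : LabeledGraph V A}

theorem walk_append {p m q : V} {u v : List A} (hu : G.Walk p u m) (hv : G.Walk m v q) :
    G.Walk p (u ++ v) q := by
  induction u generalizing p with
  | nil => cases hu; exact hv
  | cons a u ih =>
    obtain ⟨r, he, hw⟩ := hu
    exact ⟨r, he, ih hw⟩

theorem Deterministic.walk_unique (hG : G.Deterministic) {p q q' : V} {u : List A}
    (h : G.Walk p u q) (h' : G.Walk p u q') : q = q' := by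
  induction u generalizing p with
  | nil => exact h.symm.trans h'
  | cons a u ih =>
    obtain ⟨r, he, hw⟩ := h
    obtain ⟨r', he', hw'⟩ := h'
    cases hG p a r r' he he'
    exact ih hw hw'

end LabeledGraph

open LabeledGraph

namespace V3

variable {n : ℕ} {Q : Fin n → Type}

/-- The vertices `t` and `r_i`, whose only edges are their `▷` loops. -/
def IsSink : V3 Q → Prop
  | .t => True
  | .fail _ => True
  | _ => False

end V3

namespace Red3

variable {n : ℕ} {Q : Fin n → Type} {A : Type} (M : ∀ i, DFA' (Q i) A)

/-- The target of the `▷` edge leaving `q ∈ Q_i`. -/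
noncomputable def verdict (i : Fin n) (q : Q i) : V3 Q :=
  open Classical in if q ∈ (M i).accept then .t else .fail i

theorem deterministic : (Red3 M).Deterministic := by
  intro p a q q' h h'
  cases h <;> cases h' <;> simp_all

theorem edge_verdict (i : Fin n) (q : Q i) : (Red3 M).Edge (.st i q) .rm (verdict M i q) := by
  unfold verdict
  split_ifs with hq
  · exact .acc i q hq
  · exact .rej i q hq

theorem verdict_isSink (i : Fin n) (q : Q i) : (verdict M i q).IsSink := by
  unfold verdict
  split_ifs <;> trivial

theorem mem_accept_of_verdict_eq {i j : Fin n} (hij : i ≠ j) {q : Q i} {q' : Q j}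
    (h : verdict M i q = verdict M j q') : q ∈ (M i).accept := by
  unfold verdict at h
  split_ifs at h with hq hq' <;> simp_all

theorem walk_isSink_iff {q r : V3 Q} (hq : q.IsSink) {z : List (Sym3 A)} :
    (Red3 M).Walk q z r ↔ r = q ∧ ∀ c ∈ z, c = .rm := by
  induction z with
  | nil => exact ⟨fun h => ⟨h.symm, by simp⟩, fun h => h.1.symm⟩
  | cons c z ih =>
    constructor
    · rintro ⟨r', he, hw⟩
      cases q <;> cases hq <;> cases he <;> simpa using ih.mp hw
    · rintro ⟨rfl, hz⟩
      obtain rfl : c = .rm := hz c List.mem_cons_self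
      refine ⟨r, ?_, ih.mpr ⟨rfl, fun c hc => hz c (List.mem_cons_of_mem _ hc)⟩⟩
      cases r <;> cases hq <;> constructor

theorem walk_pre_of_lm_notMem (i : Fin n) {x : List (Sym3 A)} (hx : .lm ∉ x) :
    (Red3 M).Walk (.pre i) x (.pre i) := by
  induction x with
  | nil => rfl
  | cons c x ih =>
    rw [List.mem_cons, not_or] at hx
    cases c with
    | letter a => exact ⟨_, .preLetter i a, ih hx.2⟩
    | lm => exact absurd rfl hx.1
    | rm => exact ⟨_, .preRm i, ih hx.2⟩

theorem walk_st_letters (i : Fin n) (q : Q i) (v : List A) :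
    (Red3 M).Walk (.st i q) (v.map .letter) (.st i ((M i).evalFrom q v)) := by
  induction v generalizing q with
  | nil => rfl
  | cons a v ih => exact ⟨_, .dfaStep i q a, ih _⟩

theorem walk_st_verdict (i : Fin n) (q : Q i) (v : List A) {z : List (Sym3 A)}
    (hz : ∀ c ∈ z, c = .rm) :
    (Red3 M).Walk (.st i q) (v.map .letter ++ .rm :: z) (verdict M i ((M i).evalFrom q v)) :=
  walk_append (walk_st_letters M i _ v)
    ⟨_, edge_verdict M i _, (walk_isSink_iff M (verdict_isSink M i _)).mpr ⟨rfl, hz⟩⟩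

theorem exists_of_walk_st {i : Fin n} {q : Q i} {y : List (Sym3 A)} {r : V3 Q}
    (h : (Red3 M).Walk (.st i q) y r) :
    ∃ v : List A, (y = v.map .letter ∧ r = .st i ((M i).evalFrom q v)) ∨
      ∃ z, y = v.map .letter ++ .rm :: z ∧ (∀ c ∈ z, c = .rm) ∧
        r = verdict M i ((M i).evalFrom q v) := by
  induction y generalizing q with
  | nil => exact ⟨[], .inl ⟨rfl, h.symm⟩⟩
  | cons c y ih =>
    obtain ⟨r', he, hw⟩ := h
    cases he with
    | dfaStep _ _ a =>
      obtain ⟨v, ⟨rfl, rfl⟩ | ⟨z, rfl, hz, rfl⟩⟩ := ih hw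
      · exact ⟨a :: v, .inl ⟨rfl, rfl⟩⟩
      · exact ⟨a :: v, .inr ⟨z, rfl, hz, rfl⟩⟩
    | acc _ _ hq =>
      obtain ⟨rfl, hy⟩ := (walk_isSink_iff M (q := .t) trivial).mp hw
      exact ⟨[], .inr ⟨y, rfl, hy, (if_pos hq).symm⟩⟩
    | rej _ _ hq =>
      obtain ⟨rfl, hy⟩ := (walk_isSink_iff M (q := .fail i) trivial).mp hw
      exact ⟨[], .inr ⟨y, rfl, hy, (if_neg hq).symm⟩⟩

theorem exists_of_walk_of_lm_mem {q r : V3 Q} {u : List (Sym3 A)}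
    (h : (Red3 M).Walk q u r) (hu : .lm ∈ u) :
    ∃ i x y, q = .pre i ∧ u = x ++ .lm :: y ∧ .lm ∉ x ∧
      (Red3 M).Walk (.st i (M i).start) y r := by
  induction u generalizing q with
  | nil => simp at hu
  | cons c u ih =>
    obtain ⟨r', he, hw⟩ := h
    cases he with
    | enter i => exact ⟨i, [], u, rfl, rfl, by simp, hw⟩
    | preRm i | preLetter i _ =>
      obtain ⟨j, x, y, hj, rfl, hx, hy⟩ := ih hw (by simpa using hu)
      cases hj
      exact ⟨i, _ :: x, y, rfl, rfl, by simpa using hx, hy⟩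
    | _ => obtain ⟨_, _, _, ⟨⟩, -⟩ := ih hw (by simpa using hu)

theorem syncWord_of_mem_iInter [Nonempty (Fin n)] {w : List A} (hw : w ∈ ⋂ i, (M i).lang) :
    (Red3 M).SyncWord (.lm :: (w.map .letter ++ [.rm])) := by
  have hwalk (i : Fin n) : (Red3 M).Walk (.pre i) (.lm :: (w.map .letter ++ [.rm])) .t := by
    have := walk_st_verdict M i (M i).start w (z := []) (by simp)
    rw [verdict, if_pos (show _ ∈ (M i).accept from Set.mem_iInter.mp hw i)] at this
    exact ⟨_, .enter i, this⟩
  refine ⟨.t, Set.eq_singleton_iff_unique_mem.mpr ⟨?_, ?_⟩⟩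
  · inhabit Fin n
    exact ⟨_, trivial, hwalk default⟩
  · rintro r ⟨q, -, hq⟩
    obtain ⟨i, -, -, rfl, -⟩ := exists_of_walk_of_lm_mem M hq List.mem_cons_self
    exact (deterministic M).walk_unique hq (hwalk i)

theorem exists_mem_iInter_of_syncWord [Nontrivial (Fin n)] {u : List (Sym3 A)}
    (hu : (Red3 M).SyncWord u) : ∃ w ∈ ⋂ i, (M i).lang, w.length + 2 ≤ u.length := by
  obtain ⟨r, hr⟩ := hu
  have hend {q r'} (h : (Red3 M).Walk q u r') : r' = r := by
    rw [← Set.mem_singleton_iff, ← hr]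
    exact ⟨q, trivial, h⟩
  obtain ⟨i₀, i₁, hi⟩ := exists_pair_ne (Fin n)
  have hlm : .lm ∈ u := by
    by_contra hlm
    exact hi <| V3.pre.inj <|
      (hend (walk_pre_of_lm_notMem M i₀ hlm)).trans (hend (walk_pre_of_lm_notMem M i₁ hlm)).symm
  obtain ⟨q, -, hq⟩ : r ∈ (Red3 M).transSet Set.univ u := hr ▸ rfl
  obtain ⟨i, x, y, rfl, rfl, hx, hy⟩ := exists_of_walk_of_lm_mem M hq hlm
  have hwalk (j : Fin n) {r'} (h : (Red3 M).Walk (.st j (M j).start) y r') :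
      (Red3 M).Walk (.pre j) (x ++ .lm :: y) r' :=
    walk_append (walk_pre_of_lm_notMem M j hx) ⟨_, .enter j, h⟩
  obtain ⟨v, ⟨rfl, -⟩ | ⟨z, rfl, hz, -⟩⟩ := exists_of_walk_st M hy
  · have := (hend (hwalk i₀ (walk_st_letters M i₀ _ v))).trans
      (hend (hwalk i₁ (walk_st_letters M i₁ _ v))).symm
    exact absurd (V3.st.inj this).1 hi
  · refine ⟨v, Set.mem_iInter.mpr fun j => ?_, ?_⟩
    · obtain ⟨k, hk⟩ := exists_ne j
      exact mem_accept_of_verdict_eq M hk.symm <|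
        (hend (hwalk j (walk_st_verdict M j _ v hz))).trans
          (hend (hwalk k (walk_st_verdict M k _ v hz))).symm
    · simp only [List.length_append, List.length_cons, List.length_map]
      omega

end Red3

theorem stmt17_general {n : ℕ} {Q : Fin n → Type} {A : Type}
    (hn : 2 ≤ n)
    (M : ∀ i, DFA' (Q i) A)
    (hne : (⋂ i, (M i).lang).Nonempty) :
    sInf { m : ℕ | ∃ u : List (Sym3 A), (Red3 M).SyncWord u ∧ u.length = m } =
      2 + sInf { m : ℕ | ∃ w ∈ ⋂ i, (M i).lang, w.length = m } := by
  have := Fin.nontrivial_iff_two_le.mpr hn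
  obtain ⟨w, hw, hw_min⟩ :=
    Nat.sInf_mem (s := { m | ∃ w ∈ ⋂ i, (M i).lang, w.length = m }) (hne.image List.length)
  have hsync := Red3.syncWord_of_mem_iInter M hw
  apply le_antisymm
  · refine Nat.sInf_le ⟨_, hsync, ?_⟩
    simp only [List.length_cons, List.length_append, List.length_map, List.length_nil, hw_min]
    omega
  · refine le_csInf ⟨_, _, hsync, rfl⟩ ?_
    rintro _ ⟨u, hu, rfl⟩
    obtain ⟨w', hw', hlen⟩ := Red3.exists_mem_iInter_of_syncWord M hu
    have := Nat.sInf_le (s := { m | ∃ w ∈ ⋂ i, (M i).lang, w.length = m }) ⟨w', hw', rfl⟩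
    omega

/-- Let `n ≥ 2`, let `M_1, …, M_n` be DFAs over a common alphabet `Σ`, and let
`G` be the graph of the third reduction construction. If `⋂ᵢ L(Mᵢ) ≠ ∅`, then
the minimum length of a synchronizing word for `G` equals 2 plus the minimum
length of a word in `⋂ᵢ L(Mᵢ)`. -/
theorem stmt17 {n : ℕ} {Q : Fin n → Type} {A : Type}
    [Fintype A] [∀ i, Fintype (Q i)] (hn : 2 ≤ n)
    (M : ∀ i, DFA' (Q i) A)
    (hne : (⋂ i, (M i).lang).Nonempty) :
    sInf { m : ℕ | ∃ u : List (Sym3 A), (Red3 M).SyncWord u ∧ u.length = m } =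
      2 + sInf { m : ℕ | ∃ w ∈ ⋂ i, (M i).lang, w.length = m } :=
  stmt17_general hn M hne
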